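/- arXiv:2008.13376 — 2 statements merged into one kernel-verified Lean document; each statement's English description precedes it below -/
import Mathlib

section
/- Let r ≥ 0 and let L^0 ⊋ L^1 ⊋ … ⊋ L^r ⊋ m_E·L^0 be O_E-lattices in E^n, and let μ be a norm on E^n. Then the following are equivalent: (i) for every pair (x, y) of nonzero elements of E^n, if μ_{L^i}(x) ≥ μ_{L^i}(y) for all 0 ≤ i ≤ r, then μ(x) ≥ μ(y); (ii) there exist real numbers a_0, …, a_r ≥ 0 such that μ(x) = Σ_{i=0}^r a_i·μ_{L^i}(x) for all x ∈ E^n. -/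
noncomputable section

open scoped Pointwise

/-- The data of a complete discrete valuation field `E` with finite residue field of
cardinality `q`, packaged via its standard absolute value `v : E → ℝ` (so `v π = q⁻¹` for a
uniformizer `π`, `v 0 = 0`). -/
structure NonarchCDVF (E : Type*) [Field E] (q : ℕ) : Type _ where
  /-- the standard absolute value -/
  v : E → ℝ
  v_zero : v 0 = 0
  v_pos : ∀ x : E, x ≠ 0 → 0 < v x
  v_mul : ∀ x y : E, v (x * y) = v x * v y
  v_add : ∀ x y : E, v (x + y) ≤ max (v x) (v y)
  one_lt_q : 1 < q
  /-- the valuation is discrete with value group `q^ℤ` -/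
  discrete : ∀ x : E, x ≠ 0 → ∃ m : ℤ, v x = (q : ℝ) ^ m
  exists_uniformizer : ∃ π : E, v π = (q : ℝ) ^ (-1 : ℤ)
  /-- the residue field `O_E/m_E` is finite of cardinality `q` -/
  residue_card : ∃ S : Finset E, S.card = q ∧
    ∀ x : E, v x ≤ 1 → ∃! s, s ∈ S ∧ v (x - s) < 1
  /-- `E` is complete: every Cauchy sequence converges -/
  complete : ∀ f : ℕ → E,
    (∀ ε : ℝ, 0 < ε → ∃ N : ℕ, ∀ m ≥ N, ∀ k ≥ N, v (f m - f k) < ε) →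
    ∃ l : E, ∀ ε : ℝ, 0 < ε → ∃ N : ℕ, ∀ m ≥ N, v (f m - l) < ε

namespace NonarchCDVF

variable {E : Type*} [Field E] {q : ℕ}

/-- The `O_E`-submodule of `E^n` generated by a finite set `B`
(`O_E = {a : E | v a ≤ 1}` is the valuation ring). -/
def latticeOf (D : NonarchCDVF E q) {n : ℕ} (B : Finset (Fin n → E)) :
    Set (Fin n → E) :=
  {x | ∃ c : (Fin n → E) → E, (∀ b, D.v (c b) ≤ 1) ∧ x = ∑ b ∈ B, c b • b}

/-- An `O_E`-lattice in `E^n`: a finitely generated `O_E`-submodule of `E^n`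
which spans `E^n` over `E`. -/
def IsLattice (D : NonarchCDVF E q) {n : ℕ} (L : Set (Fin n → E)) : Prop :=
  ∃ B : Finset (Fin n → E),
    L = D.latticeOf B ∧ Submodule.span E (B : Set (Fin n → E)) = ⊤

/-- The norm associated to a lattice `L`: `μ_L(x) = min {v a : a ∈ E, x ∈ a • L}`. -/
def latticeNorm (D : NonarchCDVF E q) {n : ℕ} (L : Set (Fin n → E))
    (x : Fin n → E) : ℝ :=
  sInf {r : ℝ | ∃ a : E, D.v a = r ∧ ∃ y ∈ L, x = a • y}

/-- A norm on `E^n`. -/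
def IsNorm (D : NonarchCDVF E q) {n : ℕ} (μ : (Fin n → E) → ℝ) : Prop :=
  (∀ (a : E) (x : Fin n → E), μ (a • x) = D.v a * μ x) ∧
  (∀ x y : Fin n → E, μ (x + y) ≤ max (μ x) (μ y)) ∧
  (∀ x : Fin n → E, x ≠ 0 → 0 < μ x)

/-- The image `m_E • L` of a set `L ⊆ E^n` under the maximal ideal
`m_E = {a : E | v a < 1}`. -/
def maxIdealSmul (D : NonarchCDVF E q) {n : ℕ} (L : Set (Fin n → E)) :
    Set (Fin n → E) :=
  {z | ∃ a : E, D.v a < 1 ∧ ∃ y ∈ L, z = a • y}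

end NonarchCDVF

/-!
Write `ν_i` for the norm of `L^i`. Since `L^0 ⊇ ⋯ ⊇ L^r ⊇ m_E L^0`, for `x ≠ 0` the values
`ν_0 x ≤ ⋯ ≤ ν_r x ≤ q ν_0 x` are powers of `q`, so `(ν_i x)_i` is `q^m` times one of the `r + 1`
step profiles `(1, …, 1, q, …, q)`, and the strictness of the chain shows that every profile
occurs, say at `x_t`. Under (i), `μ` is determined by the `ν_i` and scales like them, so
`μ x = q^m μ(x_t)`. Condition (i) also makes `C_t = μ(x_t)` antitone with `C_0 ≤ q C_r`, which is
exactly what the triangular system `∑_i a_i · profile_t(i) = C_t` needs to have a nonnegative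
solution.
-/

open Finset

lemma exists_isLeast_of_forall_eq_zpow {q : ℝ} (hq : 1 < q) {S : Set ℝ} (hne : S.Nonempty)
    (hS : ∀ s ∈ S, ∃ k : ℤ, s = q ^ k) {c : ℝ} (hc : 0 < c) (hcS : ∀ s ∈ S, c ≤ s) :
    ∃ s, IsLeast S s := by
  obtain ⟨N, hN⟩ := exists_pow_lt_of_lt_one hc (inv_lt_one_of_one_lt₀ hq)
  have hbdd : ∃ b : ℤ, ∀ k : ℤ, q ^ k ∈ S → b ≤ k := by
    refine ⟨-N, fun k hk => (zpow_le_zpow_iff_right₀ hq).1 ?_⟩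
    rw [zpow_neg, zpow_natCast, ← inv_pow]
    exact (hN.trans_le (hcS _ hk)).le
  obtain ⟨s₀, hs₀⟩ := hne
  obtain ⟨k₀, rfl⟩ := hS s₀ hs₀
  obtain ⟨k, hk, hmin⟩ := Int.exists_least_of_bdd hbdd ⟨k₀, hs₀⟩
  refine ⟨q ^ k, hk, fun s hs => ?_⟩
  obtain ⟨j, rfl⟩ := hS s hs
  exact zpow_le_zpow_right₀ hq.le (hmin j hs)

section StepProfile

variable {q : ℝ} {r : ℕ}

def stepProfile (q : ℝ) (t i : Fin (r + 1)) : ℝ := if i ≤ t then 1 else q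

lemma stepProfile_le (hq : 1 ≤ q) (t i : Fin (r + 1)) : stepProfile q t i ≤ q := by
  unfold stepProfile
  split_ifs <;> simp [hq]

lemma stepProfile_anti (hq : 1 ≤ q) {s t : Fin (r + 1)} (hst : s ≤ t) (i : Fin (r + 1)) :
    stepProfile q t i ≤ stepProfile q s i := by
  unfold stepProfile
  split_ifs with hit his his'
  exacts [le_rfl, hq, absurd (his'.trans hst) hit, le_rfl]

lemma stepProfile_last (i : Fin (r + 1)) : stepProfile q (Fin.last r) i = 1 :=
  if_pos (Fin.le_last i)

lemma eq_zpow_mul_stepProfile (hq : 1 < q) {w : Fin (r + 1) → ℝ} (hw : Monotone w)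
    (hlast : w (Fin.last r) ≤ q * w 0) (hzpow : ∀ i, ∃ k : ℤ, w i = q ^ k) {m : ℤ}
    {t : Fin (r + 1)} (h0 : q ^ m ≤ w 0) (ht : w t ≤ q ^ m) (hgt : ∀ i, t < i → q ^ m < w i)
    (i : Fin (r + 1)) : w i = q ^ m * stepProfile q t i := by
  have hw0 : w 0 = q ^ m := le_antisymm ((hw (Fin.zero_le t)).trans ht) h0
  unfold stepProfile
  split_ifs with hit
  · rw [mul_one]
    exact le_antisymm ((hw hit).trans ht) (hw0 ▸ hw (Fin.zero_le i))
  · obtain ⟨k, hk⟩ := hzpow i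
    have hmk : m < k := (zpow_lt_zpow_iff_right₀ hq).1 (hk ▸ hgt i (not_le.1 hit))
    refine le_antisymm ?_ ?_
    · calc w i ≤ w (Fin.last r) := hw (Fin.le_last i)
        _ ≤ q * w 0 := hlast
        _ = q ^ m * q := by rw [hw0, mul_comm]
    · rw [hk, ← zpow_add_one₀ (by positivity)]
      exact zpow_le_zpow_right₀ hq.le hmk

lemma exists_eq_zpow_mul_stepProfile (hq : 1 < q) {w : Fin (r + 1) → ℝ} (hw : Monotone w)
    (hlast : w (Fin.last r) ≤ q * w 0) (hzpow : ∀ i, ∃ k : ℤ, w i = q ^ k) :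
    ∃ (m : ℤ) (t : Fin (r + 1)), ∀ i, w i = q ^ m * stepProfile q t i := by
  obtain ⟨m, hm⟩ := hzpow 0
  obtain ⟨t, ht, htmax⟩ :=
    (univ.filter fun i => w i ≤ q ^ m).exists_max_image id ⟨0, by simp [hm]⟩
  refine ⟨m, t, eq_zpow_mul_stepProfile hq hw hlast hzpow hm.ge (by simpa using ht) ?_⟩
  intro i hti
  by_contra! hi
  exact (htmax i (by simpa using hi)).not_gt hti

lemma exists_nonneg_weights_nat (hq : 1 < q) (r : ℕ) (c : ℕ → ℝ) (hc : ∀ k < r, c (k + 1) ≤ c k)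
    (hcr : c 0 ≤ q * c r) :
    ∃ a : ℕ → ℝ, (∀ k ≤ r, 0 ≤ a k) ∧
      ∀ t ≤ r, ∑ k ∈ range (r + 1), a k * (if k ≤ t then 1 else q) = c t := by
  set a : ℕ → ℝ := fun k => ((if k = 0 then q * c r else c (k - 1)) - c k) / (q - 1)
  have hq1 : 0 < q - 1 := sub_pos.2 hq
  have hpartial : ∀ t, ∑ k ∈ range (t + 1), a k = (q * c r - c t) / (q - 1) := by
    intro t
    induction t with
    | zero => simp [a]
    | succ t ih =>
      rw [sum_range_succ, ih]
      simp only [a, Nat.add_sub_cancel, if_neg t.succ_ne_zero]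
      ring
  refine ⟨a, fun k hk => div_nonneg (sub_nonneg.2 ?_) hq1.le, fun t ht => ?_⟩
  · rcases k with _ | k
    · simpa using hcr
    · simpa using hc k (by omega)
  have hhead : ∑ k ∈ range (t + 1), a k * (if k ≤ t then 1 else q) = ∑ k ∈ range (t + 1), a k :=
    sum_congr rfl fun k hk => by rw [if_pos (Nat.lt_succ_iff.1 (mem_range.1 hk)), mul_one]
  have htail : ∑ k ∈ Ico (t + 1) (r + 1), a k * (if k ≤ t then 1 else q) =
      q * ∑ k ∈ Ico (t + 1) (r + 1), a k := by
    rw [mul_sum]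
    exact sum_congr rfl fun k hk => by
      rw [if_neg (by simp at hk; omega), mul_comm]
  rw [← sum_range_add_sum_Ico _ (by omega : t + 1 ≤ r + 1), hhead, htail,
    sum_Ico_eq_sub _ (by omega), hpartial, hpartial]
  field_simp
  ring

open Fin.NatCast in
lemma exists_nonneg_weights (hq : 1 < q) (C : Fin (r + 1) → ℝ) (hC : Antitone C)
    (hCr : C 0 ≤ q * C (Fin.last r)) :
    ∃ a : Fin (r + 1) → ℝ, (∀ i, 0 ≤ a i) ∧ ∀ t, ∑ i, a i * stepProfile q t i = C t := by
  obtain ⟨a, ha, hsum⟩ := exists_nonneg_weights_nat hq r (fun k : ℕ => C (k : Fin (r + 1)))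
    (fun k hk => hC ((Fin.natCast_le_natCast hk.le hk).2 k.le_succ))
    (by simpa [Fin.natCast_eq_last] using hCr)
  refine ⟨fun i => a i, fun i => ha i (Fin.is_le i), fun t => ?_⟩
  calc ∑ i : Fin (r + 1), a i * stepProfile q t i
        = ∑ k ∈ range (r + 1), a k * (if k ≤ (t : ℕ) then 1 else q) := by
        rw [← Fin.sum_univ_eq_sum_range (fun k => a k * if k ≤ (t : ℕ) then 1 else q)]
        rfl
    _ = C t := by rw [hsum t t.is_le, Fin.cast_val_eq_self]

end StepProfile

namespace NonarchCDVF

variable {E : Type*} [Field E] {q : ℕ} (D : NonarchCDVF E q)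

lemma v_nonneg (x : E) : 0 ≤ D.v x := by
  rcases eq_or_ne x 0 with rfl | hx
  exacts [D.v_zero.ge, (D.v_pos x hx).le]

def toAbsoluteValue : AbsoluteValue E ℝ where
  toFun := D.v
  map_mul' := D.v_mul
  nonneg' := D.v_nonneg
  eq_zero' x := ⟨fun h => by_contra fun hx => (D.v_pos x hx).ne' h, fun h => h ▸ D.v_zero⟩
  add_le' x y := (D.v_add x y).trans (max_le_add_of_nonneg (D.v_nonneg x) (D.v_nonneg y))

lemma v_one : D.v 1 = 1 := map_one D.toAbsoluteValue

lemma v_inv (x : E) : D.v x⁻¹ = (D.v x)⁻¹ := map_inv₀ D.toAbsoluteValue x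

lemma one_lt_cast_q (D : NonarchCDVF E q) : (1 : ℝ) < q := by exact_mod_cast D.one_lt_q

lemma exists_v_eq_zpow (m : ℤ) : ∃ c : E, c ≠ 0 ∧ D.v c = (q : ℝ) ^ m := by
  obtain ⟨π, hπ⟩ := D.exists_uniformizer
  have hπ0 : π ≠ 0 := by
    rintro rfl
    exact (zpow_pos (zero_lt_one.trans D.one_lt_cast_q) _).ne' (hπ.symm.trans D.v_zero)
  refine ⟨π ^ (-m), zpow_ne_zero _ hπ0, ?_⟩
  rw [show D.v (π ^ (-m)) = D.v π ^ (-m) from map_zpow₀ D.toAbsoluteValue π (-m), hπ, ← zpow_mul]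
  simp

lemma v_sum_le {ι : Type*} (s : Finset ι) (f : ι → E) : D.v (∑ i ∈ s, f i) ≤ ∑ i ∈ s, D.v (f i) :=
  D.toAbsoluteValue.sum_le s f

section Lattice

variable {D} {n : ℕ} {L L' : Set (Fin n → E)}

namespace IsLattice

lemma zero_mem (hL : D.IsLattice L) : (0 : Fin n → E) ∈ L := by
  obtain ⟨B, rfl, -⟩ := hL
  exact ⟨0, fun _ => by simp [D.v_zero], by simp⟩

lemma smul_mem (hL : D.IsLattice L) {a : E} (ha : D.v a ≤ 1) {x : Fin n → E} (hx : x ∈ L) :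
    a • x ∈ L := by
  obtain ⟨B, rfl, -⟩ := hL
  obtain ⟨c, hc, rfl⟩ := hx
  refine ⟨fun b => a * c b, fun b => ?_, by simp [Finset.smul_sum, smul_smul]⟩
  rw [D.v_mul]
  exact mul_le_one₀ ha (D.v_nonneg _) (hc b)

lemma exists_smul_eq (hL : D.IsLattice L) (x : Fin n → E) : ∃ a : E, ∃ y ∈ L, x = a • y := by
  obtain ⟨B, rfl, hspan⟩ := hL
  have hx : x ∈ Submodule.span E (B : Set (Fin n → E)) := hspan ▸ Submodule.mem_top
  obtain ⟨f, hfB, rfl⟩ := Submodule.mem_span_finset.1 hx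
  obtain ⟨N, hN⟩ := pow_unbounded_of_one_lt (∑ b ∈ B, D.v (f b)) D.one_lt_cast_q
  obtain ⟨c, hc0, hc⟩ := D.exists_v_eq_zpow N
  have hf : ∀ b, D.v (f b) ≤ D.v c := by
    intro b
    rw [hc, zpow_natCast]
    by_cases hb : b ∈ B
    · exact ((Finset.single_le_sum (fun b _ => D.v_nonneg (f b)) hb).trans hN.le)
    · rw [Function.notMem_support.1 (fun h => hb (hfB h)), D.v_zero]
      positivity
  refine ⟨c, _, ⟨fun b => c⁻¹ * f b, fun b => ?_, rfl⟩, ?_⟩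
  · rw [D.v_mul, D.v_inv]
    exact inv_mul_le_one_of_le₀ (hf b) (D.v_nonneg c)
  · simp [Finset.smul_sum, smul_smul, mul_inv_cancel_left₀ hc0]

lemma exists_pos_le_v_of_eq_smul (hL : D.IsLattice L) {x : Fin n → E} (hx : x ≠ 0) :
    ∃ c > 0, ∀ (a : E), ∀ y ∈ L, x = a • y → c ≤ D.v a := by
  obtain ⟨B, rfl, -⟩ := hL
  obtain ⟨j, hj⟩ := Function.ne_iff.1 hx
  set M := max (∑ b ∈ B, D.v (b j)) 1
  have hM : 0 < M := lt_max_of_lt_right one_pos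
  refine ⟨D.v (x j) / M, div_pos (D.v_pos _ hj) hM, ?_⟩
  rintro a _ ⟨c, hc, rfl⟩ rfl
  rw [div_le_iff₀ hM, Pi.smul_apply, smul_eq_mul, D.v_mul]
  refine mul_le_mul_of_nonneg_left ?_ (D.v_nonneg a)
  rw [Finset.sum_apply]
  refine ((D.v_sum_le _ _).trans (Finset.sum_le_sum fun b _ => ?_)).trans (le_max_left _ _)
  rw [Pi.smul_apply, smul_eq_mul, D.v_mul]
  exact mul_le_of_le_one_left (D.v_nonneg _) (hc b)

end IsLattice

variable (D) in
lemma latticeNorm_nonneg (L : Set (Fin n → E)) (x : Fin n → E) : 0 ≤ D.latticeNorm L x :=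
  Real.sInf_nonneg (by rintro _ ⟨a, rfl, -⟩; exact D.v_nonneg a)

variable (D) in
lemma latticeNorm_smul_le_of_mem {y : Fin n → E} (hy : y ∈ L) (a : E) :
    D.latticeNorm L (a • y) ≤ D.v a :=
  csInf_le ⟨0, by rintro _ ⟨b, rfl, -⟩; exact D.v_nonneg b⟩ ⟨a, rfl, y, hy, rfl⟩

namespace IsLattice

lemma latticeNorm_zero (hL : D.IsLattice L) : D.latticeNorm L 0 = 0 :=
  le_antisymm (by simpa [D.v_zero] using D.latticeNorm_smul_le_of_mem hL.zero_mem (0 : E))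
    (D.latticeNorm_nonneg L 0)

lemma exists_smul_eq_latticeNorm (hL : D.IsLattice L) (x : Fin n → E) :
    ∃ a : E, ∃ y ∈ L, x = a • y ∧ D.v a = D.latticeNorm L x := by
  rcases eq_or_ne x 0 with rfl | hx
  · exact ⟨0, 0, hL.zero_mem, (smul_zero _).symm, by rw [D.v_zero, hL.latticeNorm_zero]⟩
  obtain ⟨c, hc, hcv⟩ := hL.exists_pos_le_v_of_eq_smul hx
  obtain ⟨s, hs⟩ := exists_isLeast_of_forall_eq_zpow D.one_lt_cast_q
    (S := {r | ∃ a : E, D.v a = r ∧ ∃ y ∈ L, x = a • y})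
    (by obtain ⟨a, y, hy, rfl⟩ := hL.exists_smul_eq x; exact ⟨_, a, rfl, y, hy, rfl⟩)
    (by rintro _ ⟨a, rfl, y, -, rfl⟩; exact D.discrete a (left_ne_zero_of_smul hx)) hc
    (by rintro _ ⟨a, rfl, y, hy, hxy⟩; exact hcv a y hy hxy)
  obtain ⟨a, ha, y, hy, rfl⟩ := hs.1
  exact ⟨a, y, hy, rfl, ha.trans hs.csInf_eq.symm⟩

lemma exists_latticeNorm_eq_zpow (hL : D.IsLattice L) {x : Fin n → E} (hx : x ≠ 0) :
    ∃ k : ℤ, D.latticeNorm L x = (q : ℝ) ^ k := by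
  obtain ⟨a, y, -, rfl, ha⟩ := hL.exists_smul_eq_latticeNorm x
  exact ha ▸ D.discrete a (left_ne_zero_of_smul hx)

lemma latticeNorm_smul (hL : D.IsLattice L) {a : E} (ha : a ≠ 0) (x : Fin n → E) :
    D.latticeNorm L (a • x) = D.v a * D.latticeNorm L x := by
  have hle : ∀ (b : E) (z : Fin n → E), D.latticeNorm L (b • z) ≤ D.v b * D.latticeNorm L z := by
    intro b z
    obtain ⟨c, y, hy, rfl, hc⟩ := hL.exists_smul_eq_latticeNorm z
    rw [smul_smul, ← hc, ← D.v_mul]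
    exact D.latticeNorm_smul_le_of_mem hy _
  refine le_antisymm (hle a x) ?_
  have := hle a⁻¹ (a • x)
  rwa [inv_smul_smul₀ ha, D.v_inv, le_inv_mul_iff₀ (D.v_pos a ha)] at this

lemma latticeNorm_le_of_subset (hL : D.IsLattice L) (h : L ⊆ L') (x : Fin n → E) :
    D.latticeNorm L' x ≤ D.latticeNorm L x := by
  obtain ⟨a, y, hy, rfl, ha⟩ := hL.exists_smul_eq_latticeNorm x
  exact ha ▸ D.latticeNorm_smul_le_of_mem (h hy) a

lemma mem_iff_latticeNorm_le_one (hL : D.IsLattice L) {x : Fin n → E} :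
    x ∈ L ↔ D.latticeNorm L x ≤ 1 := by
  refine ⟨fun hx => ?_, fun hx => ?_⟩
  · simpa [D.v_one] using D.latticeNorm_smul_le_of_mem hx (1 : E)
  · obtain ⟨a, y, hy, rfl, ha⟩ := hL.exists_smul_eq_latticeNorm x
    exact hL.smul_mem (ha ▸ hx) hy

lemma latticeNorm_le_mul_of_maxIdealSmul_subset (hL : D.IsLattice L)
    (h : D.maxIdealSmul L ⊆ L') (x : Fin n → E) :
    D.latticeNorm L' x ≤ q * D.latticeNorm L x := by
  obtain ⟨a, y, hy, rfl, ha⟩ := hL.exists_smul_eq_latticeNorm x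
  obtain ⟨π, hπ0, hπ⟩ := D.exists_v_eq_zpow (-1)
  have hπy : π • y ∈ L' :=
    h ⟨π, hπ ▸ zpow_lt_one_of_neg₀ D.one_lt_cast_q (by norm_num), y, hy, rfl⟩
  calc D.latticeNorm L' (a • y) = D.latticeNorm L' ((a * π⁻¹) • π • y) := by
        rw [smul_smul, mul_assoc, inv_mul_cancel₀ hπ0, mul_one]
    _ ≤ D.v (a * π⁻¹) := D.latticeNorm_smul_le_of_mem hπy _
    _ = q * D.latticeNorm L (a • y) := by
        rw [D.v_mul, D.v_inv, hπ, ha, zpow_neg_one, inv_inv, mul_comm]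

lemma one_le_latticeNorm_of_notMem_maxIdealSmul (hL : D.IsLattice L) {x : Fin n → E}
    (hx : x ∉ D.maxIdealSmul L) : 1 ≤ D.latticeNorm L x := by
  obtain ⟨a, y, hy, rfl, ha⟩ := hL.exists_smul_eq_latticeNorm x
  by_contra! h
  exact hx ⟨a, ha ▸ h, y, hy, rfl⟩

end IsLattice

end Lattice

section Chain

variable {D} {n r : ℕ} {L : Fin (r + 1) → Set (Fin n → E)}

lemma monotone_latticeNorm (hlat : ∀ i, D.IsLattice (L i)) (hL : Antitone L) (x : Fin n → E) :
    Monotone fun i => D.latticeNorm (L i) x :=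
  fun _ j hij => (hlat j).latticeNorm_le_of_subset (hL hij) x

lemma exists_latticeNorm_eq_zpow_mul_stepProfile (hlat : ∀ i, D.IsLattice (L i))
    (hL : Antitone L) (hlast : D.maxIdealSmul (L 0) ⊆ L (Fin.last r)) {x : Fin n → E}
    (hx : x ≠ 0) :
    ∃ (m : ℤ) (t : Fin (r + 1)), ∀ i, D.latticeNorm (L i) x = (q : ℝ) ^ m * stepProfile q t i :=
  exists_eq_zpow_mul_stepProfile D.one_lt_cast_q (monotone_latticeNorm hlat hL x)
    ((hlat 0).latticeNorm_le_mul_of_maxIdealSmul_subset hlast x)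
    fun i => (hlat i).exists_latticeNorm_eq_zpow hx

lemma exists_latticeNorm_eq_stepProfile (hlat : ∀ i, D.IsLattice (L i))
    (hchain : ∀ i : Fin r, L i.succ ⊂ L i.castSucc)
    (hlast : D.maxIdealSmul (L 0) ⊂ L (Fin.last r)) (t : Fin (r + 1)) :
    ∃ x ≠ 0, ∀ i, D.latticeNorm (L i) x = stepProfile q t i := by
  have hL : Antitone L := Fin.antitone_iff_succ_le.2 fun i => (hchain i).subset
  obtain ⟨x, hxt, hx0, hgt⟩ :
      ∃ x ∈ L t, x ∉ D.maxIdealSmul (L 0) ∧ ∀ i, t < i → x ∉ L i := by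
    rcases Fin.eq_castSucc_or_eq_last t with ⟨s, rfl⟩ | rfl
    · obtain ⟨x, hxs, hx⟩ := Set.exists_of_ssubset (hchain s)
      exact ⟨x, hxs, fun h => hx (hL (Fin.le_last _) (hlast.subset h)),
        fun i hi h => hx (hL (Fin.castSucc_lt_iff_succ_le.1 hi) h)⟩
    · obtain ⟨x, hx, hx0⟩ := Set.exists_of_ssubset hlast
      exact ⟨x, hx, hx0, fun i hi => absurd hi (Fin.le_last i).not_gt⟩
  have h0 := (hlat 0).one_le_latticeNorm_of_notMem_maxIdealSmul hx0
  have ht : D.latticeNorm (L t) x ≤ 1 := (hlat t).mem_iff_latticeNorm_le_one.1 hxt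
  have hgt' : ∀ i, t < i → 1 < D.latticeNorm (L i) x := fun i hi =>
    not_le.1 fun h => hgt i hi ((hlat i).mem_iff_latticeNorm_le_one.2 h)
  have hne : x ≠ 0 := by
    rintro rfl
    norm_num [(hlat 0).latticeNorm_zero] at h0
  refine ⟨x, hne, fun i => ?_⟩
  rw [← one_mul (stepProfile q t i), ← zpow_zero (q : ℝ)]
  refine eq_zpow_mul_stepProfile D.one_lt_cast_q (monotone_latticeNorm hlat hL x)
    ((hlat 0).latticeNorm_le_mul_of_maxIdealSmul_subset hlast.subset x)
    (fun i => (hlat i).exists_latticeNorm_eq_zpow hne) ?_ ?_ ?_ i <;> rwa [zpow_zero]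

lemma norm_eq_zpow_mul_of_latticeNorm_eq {μ : (Fin n → E) → ℝ}
    (hμ : ∀ (a : E) (x : Fin n → E), μ (a • x) = D.v a * μ x)
    (hcomp : ∀ x y : Fin n → E, x ≠ 0 → y ≠ 0 →
      (∀ i, D.latticeNorm (L i) y ≤ D.latticeNorm (L i) x) → μ y ≤ μ x)
    (hlat : ∀ i, D.IsLattice (L i)) {x y : Fin n → E} (hx : x ≠ 0) (hy : y ≠ 0) {m : ℤ}
    (hxy : ∀ i, D.latticeNorm (L i) x = (q : ℝ) ^ m * D.latticeNorm (L i) y) :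
    μ x = (q : ℝ) ^ m * μ y := by
  obtain ⟨c, hc0, hc⟩ := D.exists_v_eq_zpow m
  have hν : ∀ i, D.latticeNorm (L i) (c • y) = D.latticeNorm (L i) x := fun i => by
    rw [(hlat i).latticeNorm_smul hc0, hc, hxy]
  have hcy : c • y ≠ 0 := smul_ne_zero hc0 hy
  rw [← hc, ← hμ]
  exact le_antisymm (hcomp _ _ hcy hx fun i => (hν i).ge) (hcomp _ _ hx hcy fun i => (hν i).le)

end Chain

end NonarchCDVF

theorem statement3_general {E : Type*} [Field E] {q : ℕ} (D : NonarchCDVF E q) (n : ℕ)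
    (r : ℕ) (L : Fin (r + 1) → Set (Fin n → E))
    (hlat : ∀ i, D.IsLattice (L i))
    (hchain : ∀ i : Fin r, L i.succ ⊂ L i.castSucc)
    (hlast : D.maxIdealSmul (L 0) ⊂ L (Fin.last r))
    (μ : (Fin n → E) → ℝ) (hμ : D.IsNorm μ) :
    (∀ x y : Fin n → E, x ≠ 0 → y ≠ 0 →
        (∀ i, D.latticeNorm (L i) y ≤ D.latticeNorm (L i) x) → μ y ≤ μ x) ↔
      (∃ a : Fin (r + 1) → ℝ, (∀ i, 0 ≤ a i) ∧
        ∀ x : Fin n → E, μ x = ∑ i, a i * D.latticeNorm (L i) x) := by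
  refine ⟨fun hcomp => ?_, fun ⟨a, ha, hμa⟩ x y _ _ hle => ?_⟩
  · have hq : (1 : ℝ) ≤ q := D.one_lt_cast_q.le
    choose X hX0 hX using NonarchCDVF.exists_latticeNorm_eq_stepProfile hlat hchain hlast
    have hC : Antitone fun t => μ (X t) := fun s t hst =>
      hcomp _ _ (hX0 s) (hX0 t) fun i => by simpa only [hX] using stepProfile_anti hq hst i
    have hCr : μ (X 0) ≤ q * μ (X (Fin.last r)) := by
      obtain ⟨c, hc0, hc⟩ := D.exists_v_eq_zpow 1
      rw [← zpow_one (q : ℝ), ← hc, ← hμ.1]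
      refine hcomp _ _ (smul_ne_zero hc0 (hX0 _)) (hX0 0) fun i => ?_
      rw [(hlat i).latticeNorm_smul hc0, hX, hX, stepProfile_last, hc, zpow_one, mul_one]
      exact stepProfile_le hq 0 i
    obtain ⟨a, ha, hsum⟩ := exists_nonneg_weights D.one_lt_cast_q _ hC hCr
    refine ⟨a, ha, fun x => ?_⟩
    rcases eq_or_ne x 0 with rfl | hx
    · simpa [D.v_zero, (hlat _).latticeNorm_zero] using hμ.1 0 0
    have hL : Antitone L := Fin.antitone_iff_succ_le.2 fun i => (hchain i).subset
    obtain ⟨m, t, hm⟩ :=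
      NonarchCDVF.exists_latticeNorm_eq_zpow_mul_stepProfile hlat hL hlast.subset hx
    rw [NonarchCDVF.norm_eq_zpow_mul_of_latticeNorm_eq hμ.1 hcomp hlat hx (hX0 t)
      fun i => by rw [hm, hX], ← hsum t, mul_sum]
    exact sum_congr rfl fun i _ => by rw [hm]; ring
  · rw [hμa x, hμa y]
    exact sum_le_sum fun i _ => mul_le_mul_of_nonneg_left (hle i) (ha i)

/-- Let `L^0 ⊋ L^1 ⊋ … ⊋ L^r ⊋ m_E·L^0` be `O_E`-lattices in `E^n` and `μ`
a norm on `E^n`.  Then: (i) `μ` respects all the inequalities between lattice norms of the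
`L^i` iff (ii) `μ` is a nonnegative linear combination of the norms `μ_{L^i}`. -/
theorem statement3 {E : Type*} [Field E] {q : ℕ} (D : NonarchCDVF E q) (n : ℕ) (hn : 1 ≤ n)
    (r : ℕ) (L : Fin (r + 1) → Set (Fin n → E))
    (hlat : ∀ i, D.IsLattice (L i))
    (hchain : ∀ i : Fin r, L i.succ ⊂ L i.castSucc)
    (hlast : D.maxIdealSmul (L 0) ⊂ L (Fin.last r))
    (μ : (Fin n → E) → ℝ) (hμ : D.IsNorm μ) :
    (∀ x y : Fin n → E, x ≠ 0 → y ≠ 0 →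
        (∀ i, D.latticeNorm (L i) y ≤ D.latticeNorm (L i) x) → μ y ≤ μ x) ↔
      (∃ a : Fin (r + 1) → ℝ, (∀ i, 0 ≤ a i) ∧
        ∀ x : Fin n → E, μ x = ∑ i, a i * D.latticeNorm (L i) x) :=
  statement3_general D n r L hlat hchain hlast μ hμ
end
end

section
/- Let μ be a norm on F_∞^n. Then: (1) there exists a family λ_1, …, λ_n ∈ Λ such that for each 1 ≤ i ≤ n, setting Λ_{i−1} = Σ_{j=1}^{i−1} A·λ_j, one has λ_i ∉ Λ_{i−1} and μ(λ_i) ≤ μ(λ) for every λ ∈ Λ ∖ Λ_{i−1}; (2) if (λ_1, …, λ_n) and (λ'_1, …, λ'_n) are two families in Λ both satisfying these conditions, then μ(λ_i) = μ(λ'_i) for every 1 ≤ i ≤ n. -/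
noncomputable section

/-- The data of the field `F_∞ = F_q((1/T))`, the completion of `F_q(T)` at the place at
infinity, packaged axiomatically: a field `Finf` which is an `F_q[T]`-algebra, together with
its standard absolute value `v` (so `v a = q^{deg a}` for nonzero `a ∈ A = F_q[T]`), such
that every element is a polynomial plus an element of absolute value `< 1`, and which is
complete. -/
structure InftySetup (Fq : Type*) [Field Fq] [Fintype Fq]
    (Finf : Type*) [Field Finf] [Algebra (Polynomial Fq) Finf] : Type _ where
  /-- the standard absolute value of `F_∞` -/
  v : Finf → ℝ
  v_zero : v 0 = 0
  v_pos : ∀ x : Finf, x ≠ 0 → 0 < v x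
  v_mul : ∀ x y : Finf, v (x * y) = v x * v y
  v_add : ∀ x y : Finf, v (x + y) ≤ max (v x) (v y)
  /-- `|a| = q^{deg a}` for nonzero `a ∈ A` -/
  v_poly : ∀ a : Polynomial Fq, a ≠ 0 →
    v (algebraMap (Polynomial Fq) Finf a) = (Fintype.card Fq : ℝ) ^ a.natDegree
  /-- `F_∞ = A + m_∞` -/
  poly_dense : ∀ x : Finf, ∃ a : Polynomial Fq,
    v (x - algebraMap (Polynomial Fq) Finf a) < 1
  /-- `F_∞` is complete -/
  complete : ∀ f : ℕ → Finf,
    (∀ ε : ℝ, 0 < ε → ∃ N : ℕ, ∀ m ≥ N, ∀ k ≥ N, v (f m - f k) < ε) →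
    ∃ l : Finf, ∀ ε : ℝ, 0 < ε → ∃ N : ℕ, ∀ m ≥ N, v (f m - l) < ε

namespace InftySetup

variable {Fq : Type*} [Field Fq] [Fintype Fq]
variable {Finf : Type*} [Field Finf] [Algebra (Polynomial Fq) Finf]

/-- A norm on the `F_∞`-vector space `F_∞^n`. -/
def IsNorm (D : InftySetup Fq Finf) {n : ℕ} (μ : (Fin n → Finf) → ℝ) : Prop :=
  (∀ (a : Finf) (x : Fin n → Finf), μ (a • x) = D.v a * μ x) ∧
  (∀ x y : Fin n → Finf, μ (x + y) ≤ max (μ x) (μ y)) ∧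
  (∀ x : Fin n → Finf, x ≠ 0 → 0 < μ x)

end InftySetup

/-- The lattice `Λ = A^n ⊆ F_∞^n`. -/
def LambdaSet (Fq : Type*) [Field Fq] [Fintype Fq]
    (Finf : Type*) [Field Finf] [Algebra (Polynomial Fq) Finf] (n : ℕ) :
    Set (Fin n → Finf) :=
  {x | ∀ i, ∃ a : Polynomial Fq, x i = algebraMap (Polynomial Fq) Finf a}

/-- `Λ_{i-1} = Σ_{j<i} A·λ_j`, the `A`-span of `λ_j` for `j < i`. -/
def partialSpan (Fq : Type*) [Field Fq] [Fintype Fq]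
    {Finf : Type*} [Field Finf] [Algebra (Polynomial Fq) Finf] {n : ℕ}
    (lam : Fin n → (Fin n → Finf)) (i : Fin n) : Set (Fin n → Finf) :=
  {x | ∃ c : Fin n → Polynomial Fq, (∀ j, ¬ j < i → c j = 0) ∧
    x = ∑ j, algebraMap (Polynomial Fq) Finf (c j) • lam j}

/-- Condition (i): `(λ_1, …, λ_n)` is an `A`-basis of `Λ` with `μ(λ_i) ≤ μ(λ_{i+1})` which is
orthonormal for `μ`. -/
def CondI {Fq : Type*} [Field Fq] [Fintype Fq]
    {Finf : Type*} [Field Finf] [Algebra (Polynomial Fq) Finf] {n : ℕ}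
    (D : InftySetup Fq Finf) (μ : (Fin n → Finf) → ℝ)
    (lam : Fin n → (Fin n → Finf)) : Prop :=
  (∀ x ∈ LambdaSet Fq Finf n, ∃! c : Fin n → Polynomial Fq,
      x = ∑ j, algebraMap (Polynomial Fq) Finf (c j) • lam j) ∧
  (Monotone fun i => μ (lam i)) ∧
  (∀ x : Fin n → Finf, μ (∑ i, x i • lam i) = ⨆ i, D.v (x i) * μ (lam i))

/-- Condition (ii): for each `i`, `λ_i ∉ Λ_{i-1}` and `λ_i` has the smallest norm among
`Λ ∖ Λ_{i-1}`. -/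
def CondII (Fq : Type*) [Field Fq] [Fintype Fq]
    {Finf : Type*} [Field Finf] [Algebra (Polynomial Fq) Finf] {n : ℕ}
    (μ : (Fin n → Finf) → ℝ) (lam : Fin n → (Fin n → Finf)) : Prop :=
  ∀ i : Fin n, lam i ∉ partialSpan Fq lam i ∧
    ∀ y ∈ LambdaSet Fq Finf n, y ∉ partialSpan Fq lam i → μ (lam i) ≤ μ y

/-!
The successive minima are chosen greedily. A minimum exists at each step because `μ` dominates
the sup norm (all norms on `F_∞^n` are equivalent, `F_∞` being complete), so a `μ`-ball contains
finitely many points of `Λ = A^n`: their coordinates are polynomials of bounded degree.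

For uniqueness, a family satisfying the minimality conditions is `F_∞`-linearly independent:
if `λ_k = ∑_{j<k} c_j λ_j`, rounding the `c_j` to polynomials gives a shorter vector of
`Λ ∖ Λ_{k-1}`. If `μ(λ'_i) < μ(λ_i)`, then `λ'_1, …, λ'_i` are all shorter than `λ_i`, hence lie
in `Λ_{i-1}`, whose `F_∞`-span has dimension `< i`, contradicting their independence.
-/

theorem LinearIndependent.card_le_card_of_forall_mem_span {K V ι κ : Type*} [DivisionRing K]
    [AddCommGroup V] [Module K V] [Fintype ι] [Fintype κ] {v : ι → V} (hv : LinearIndependent K v)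
    {w : κ → V} (h : ∀ i, v i ∈ Submodule.span K (Set.range w)) :
    Fintype.card ι ≤ Fintype.card κ := by
  classical
  exact (linearIndependent_le_span_aux' v hv _ (Set.range_subset_iff.2 h)).trans
    (Fintype.card_range_le w)

theorem linearIndependent_of_notMem_span_Iio {K V ι : Type*} [DivisionRing K] [AddCommGroup V]
    [Module K V] [LinearOrder ι] [Fintype ι] {v : ι → V}
    (h : ∀ k, v k ∉ Submodule.span K (v '' Set.Iio k)) : LinearIndependent K v := by
  classical
  refine Fintype.linearIndependent_iff.2 fun g hg => ?_
  by_contra! hne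
  obtain ⟨k, hk, hmax⟩ := (Finset.univ.filter (g · ≠ 0)).exists_max_image id
    (hne.imp fun i hi => by simpa using hi)
  replace hk : g k ≠ 0 := by simpa using hk
  have hgk : g k • v k = -∑ j ∈ Finset.univ.erase k, g j • v j :=
    eq_neg_of_add_eq_zero_left ((Finset.add_sum_erase _ _ (Finset.mem_univ k)).trans hg)
  refine h k ((Submodule.smul_mem_iff _ hk).1 ?_)
  rw [hgk]
  refine neg_mem (Submodule.sum_mem _ fun j hj => ?_)
  rcases lt_or_gt_of_ne (Finset.ne_of_mem_erase hj) with hjk | hkj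
  · exact Submodule.smul_mem _ _ (Submodule.subset_span ⟨j, hjk, rfl⟩)
  · have : g j = 0 := by_contra fun hgj => hkj.not_ge (hmax j (by simpa using hgj))
    simp [this]

namespace InftySetup

variable {Fq : Type*} [Field Fq] [Fintype Fq]
variable {Finf : Type*} [Field Finf] [Algebra (Polynomial Fq) Finf]
variable (D : InftySetup Fq Finf)

lemma v_nonneg (x : Finf) : 0 ≤ D.v x := by
  rcases eq_or_ne x 0 with rfl | hx
  · exact D.v_zero.ge
  · exact (D.v_pos x hx).le

def absoluteValue : AbsoluteValue Finf ℝ where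
  toFun := D.v
  map_mul' := D.v_mul
  nonneg' := D.v_nonneg
  eq_zero' x := ⟨fun hx => by_contra fun h => (D.v_pos x h).ne' hx, fun hx => hx ▸ D.v_zero⟩
  add_le' x y := (D.v_add x y).trans <|
    max_le (le_add_of_nonneg_right (D.v_nonneg y)) (le_add_of_nonneg_left (D.v_nonneg x))

lemma v_algebraMap_X : D.v (algebraMap (Polynomial Fq) Finf Polynomial.X) = Fintype.card Fq := by
  rw [D.v_poly _ Polynomial.X_ne_zero, Polynomial.natDegree_X, pow_one]

lemma one_lt_v_algebraMap_X : 1 < D.v (algebraMap (Polynomial Fq) Finf Polynomial.X) := by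
  rw [v_algebraMap_X]
  exact_mod_cast Fintype.one_lt_card

abbrev toNontriviallyNormedField : NontriviallyNormedField Finf :=
  letI := D.absoluteValue.toNormedField
  .ofNormNeOne ⟨_, fun h => absurd D.one_lt_v_algebraMap_X (by simp [h, D.v_zero]),
    D.one_lt_v_algebraMap_X.ne'⟩

lemma completeSpace :
    letI := D.toNontriviallyNormedField
    CompleteSpace Finf := by
  let := D.toNontriviallyNormedField
  refine Metric.complete_of_cauchySeq_tendsto fun u hu => ?_
  simp only [Metric.cauchySeq_iff, dist_eq_norm] at hu
  obtain ⟨l, hl⟩ := D.complete u hu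
  refine ⟨l, Metric.tendsto_atTop.2 ?_⟩
  simp only [dist_eq_norm]
  exact hl

lemma natDegree_le_of_v_algebraMap_le {a : Polynomial Fq} {R : ℝ}
    (h : D.v (algebraMap (Polynomial Fq) Finf a) ≤ R) : (a.natDegree : ℝ) ≤ R := by
  rcases eq_or_ne a 0 with rfl | ha
  · simpa [D.v_zero] using h
  rw [D.v_poly a ha] at h
  calc (a.natDegree : ℝ) ≤ 2 ^ a.natDegree := by exact_mod_cast Nat.lt_two_pow_self.le
    _ ≤ (Fintype.card Fq : ℝ) ^ a.natDegree := by
      gcongr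
      exact_mod_cast Fintype.one_lt_card
    _ ≤ R := h

lemma finite_setOf_v_algebraMap_le (R : ℝ) :
    {a : Polynomial Fq | D.v (algebraMap (Polynomial Fq) Finf a) ≤ R}.Finite := by
  have : Finite (Polynomial.degreeLT Fq (⌊R⌋₊ + 1)) :=
    .of_equiv _ (Polynomial.degreeLTEquiv Fq _).toEquiv.symm
  refine (Polynomial.degreeLT Fq (⌊R⌋₊ + 1) : Set (Polynomial Fq)).toFinite.subset fun a ha => ?_
  rw [SetLike.mem_coe, Polynomial.mem_degreeLT]
  refine Polynomial.degree_le_natDegree.trans_lt ?_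
  exact_mod_cast Nat.lt_succ_of_le (Nat.le_floor (D.natDegree_le_of_v_algebraMap_le ha))

end InftySetup

/-- A copy of `Fin n → Finf` without the sup norm, so that a norm `μ` can be put on it. -/
def MuSpace (Finf : Type*) (n : ℕ) : Type _ := Fin n → Finf

namespace MuSpace

variable {Finf : Type*} [Field Finf] {n : ℕ}

instance : AddCommGroup (MuSpace Finf n) := inferInstanceAs (AddCommGroup (Fin n → Finf))

instance : Module Finf (MuSpace Finf n) := inferInstanceAs (Module Finf (Fin n → Finf))

instance : FiniteDimensional Finf (MuSpace Finf n) :=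
  inferInstanceAs (FiniteDimensional Finf (Fin n → Finf))

def equiv : MuSpace Finf n ≃ₗ[Finf] (Fin n → Finf) := LinearEquiv.refl Finf (Fin n → Finf)

end MuSpace

namespace InftySetup.IsNorm

variable {Fq : Type*} [Field Fq] [Fintype Fq]
variable {Finf : Type*} [Field Finf] [Algebra (Polynomial Fq) Finf]
variable {D : InftySetup Fq Finf} {n : ℕ} {μ : (Fin n → Finf) → ℝ}

lemma map_zero (hμ : D.IsNorm μ) : μ 0 = 0 := by
  simpa [D.v_zero] using hμ.1 0 0

lemma pos (hμ : D.IsNorm μ) {x : Fin n → Finf} (hx : x ≠ 0) : 0 < μ x := hμ.2.2 x hx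

lemma nonneg (hμ : D.IsNorm μ) (x : Fin n → Finf) : 0 ≤ μ x := by
  rcases eq_or_ne x 0 with rfl | hx
  · exact hμ.map_zero.ge
  · exact (hμ.pos hx).le

lemma map_neg (hμ : D.IsNorm μ) (x : Fin n → Finf) : μ (-x) = μ x := by
  have hv : D.v (-1) = 1 := (D.absoluteValue.map_neg 1).trans D.absoluteValue.map_one
  simpa [hv] using hμ.1 (-1) x

lemma apply_sum_lt (hμ : D.IsNorm μ) {ι : Type*} {s : Finset ι} {f : ι → Fin n → Finf}
    {M : ℝ} (hM : 0 < M) (hf : ∀ j ∈ s, μ (f j) < M) : μ (∑ j ∈ s, f j) < M := by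
  rcases s.eq_empty_or_nonempty with rfl | hs
  · simpa [hμ.map_zero] using hM
  · obtain ⟨j, hj, hle⟩ := IsNonarchimedean.finset_image_add_of_nonempty hμ.2.1 f hs
    exact hle.trans_lt (hf j hj)

def addGroupNorm (hμ : D.IsNorm μ) : AddGroupNorm (MuSpace Finf n) where
  toFun := μ
  map_zero' := hμ.map_zero
  add_le' x y := (hμ.2.1 x y).trans <|
    max_le (le_add_of_nonneg_right (hμ.nonneg y)) (le_add_of_nonneg_left (hμ.nonneg x))
  neg' := hμ.map_neg
  eq_zero_of_map_eq_zero' _ hx := by_contra fun h => (hμ.pos h).ne' hx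

theorem exists_v_apply_le_mul (hμ : D.IsNorm μ) :
    ∃ C, 0 < C ∧ ∀ x i, D.v (x i) ≤ C * μ x := by
  let := D.toNontriviallyNormedField
  have := D.completeSpace
  let : NormedAddCommGroup (MuSpace Finf n) := hμ.addGroupNorm.toNormedAddCommGroup
  let : NormedSpace Finf (MuSpace Finf n) := ⟨fun a x => (hμ.1 a x).le⟩
  let f : MuSpace Finf n →L[Finf] (Fin n → Finf) :=
    ⟨MuSpace.equiv.toLinearMap, LinearMap.continuous_of_finiteDimensional _⟩
  obtain ⟨C, hC, hf⟩ := f.bound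
  exact ⟨C, hC, fun x i => (norm_le_pi_norm x i).trans (hf x)⟩

theorem finite_setOf_mem_lambdaSet_le (hμ : D.IsNorm μ) (r : ℝ) :
    {y | y ∈ LambdaSet Fq Finf n ∧ μ y ≤ r}.Finite := by
  obtain ⟨C, hC, hμC⟩ := hμ.exists_v_apply_le_mul
  refine (Set.Finite.pi' fun _ =>
    (D.finite_setOf_v_algebraMap_le (C * r)).image (algebraMap _ Finf)).subset ?_
  rintro y ⟨hy, hyr⟩ i
  obtain ⟨a, ha⟩ := hy i
  refine ⟨a, ?_, ha.symm⟩
  calc D.v (algebraMap _ Finf a) = D.v (y i) := by rw [ha]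
    _ ≤ C * r := (hμC y i).trans (by gcongr)

theorem exists_min_of_subset_lambdaSet (hμ : D.IsNorm μ) {S : Set (Fin n → Finf)}
    (hS : S ⊆ LambdaSet Fq Finf n) (hne : S.Nonempty) : ∃ m ∈ S, ∀ y ∈ S, μ m ≤ μ y := by
  obtain ⟨x, hx⟩ := hne
  obtain ⟨m, ⟨hmS, hmx⟩, hmin⟩ := Set.exists_min_image {y | y ∈ S ∧ μ y ≤ μ x} μ
    ((hμ.finite_setOf_mem_lambdaSet_le (μ x)).subset fun y hy => ⟨hS hy.1, hy.2⟩)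
    ⟨x, hx, le_rfl⟩
  refine ⟨m, hmS, fun y hy => ?_⟩
  rcases le_total (μ y) (μ x) with h | h
  · exact hmin y ⟨hy, h⟩
  · exact hmx.trans h

end InftySetup.IsNorm

section Lattice

variable (Fq : Type*) [Field Fq] [Fintype Fq]
variable {Finf : Type*} [Field Finf] [Algebra (Polynomial Fq) Finf] {n : ℕ}

variable (Finf n) in
def lambdaSubmodule : Submodule (Polynomial Fq) (Fin n → Finf) where
  carrier := LambdaSet Fq Finf n
  zero_mem' _ := ⟨0, (map_zero _).symm⟩
  add_mem' hx hy i := by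
    obtain ⟨a, ha⟩ := hx i
    obtain ⟨b, hb⟩ := hy i
    exact ⟨a + b, by simp [ha, hb]⟩
  smul_mem' c x hx i := by
    obtain ⟨a, ha⟩ := hx i
    exact ⟨c * a, by simp [Algebra.smul_def, ha]⟩

def partialSpanSubmodule (lam : Fin n → Fin n → Finf) (i : Fin n) :
    Submodule (Polynomial Fq) (Fin n → Finf) where
  carrier := partialSpan Fq lam i
  zero_mem' := ⟨0, fun _ _ => rfl, by simp⟩
  add_mem' := by
    rintro _ _ ⟨c, hc, rfl⟩ ⟨d, hd, rfl⟩
    refine ⟨c + d, fun j hj => by simp [hc j hj, hd j hj], ?_⟩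
    simp only [Pi.add_apply, map_add, add_smul, Finset.sum_add_distrib]
  smul_mem' := by
    rintro a _ ⟨c, hc, rfl⟩
    refine ⟨a • c, fun j hj => by simp [hc j hj], ?_⟩
    simp only [Finset.smul_sum, Pi.smul_apply, smul_eq_mul, map_mul, mul_smul, algebraMap_smul]

variable {Fq}

lemma mem_partialSpan_of_lt (lam : Fin n → Fin n → Finf) {i j : Fin n} (h : j < i) :
    lam j ∈ partialSpan Fq lam i := by
  classical
  refine ⟨Pi.single j 1, fun k hk => Pi.single_eq_of_ne (by rintro rfl; exact hk h) _, ?_⟩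
  simp [Pi.single_apply]

lemma partialSpan_congr {lam lam' : Fin n → Fin n → Finf} {i : Fin n}
    (h : ∀ j < i, lam j = lam' j) : partialSpan Fq lam i = partialSpan Fq lam' i := by
  suffices ∀ c : Fin n → Polynomial Fq, (∀ j, ¬ j < i → c j = 0) →
      ∑ j, algebraMap (Polynomial Fq) Finf (c j) • lam j =
        ∑ j, algebraMap (Polynomial Fq) Finf (c j) • lam' j by
    ext x
    exact exists_congr fun c => and_congr_right fun hc => by rw [this c hc]
  refine fun c hc => Finset.sum_congr rfl fun j _ => ?_
  by_cases hj : j < i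
  · rw [h j hj]
  · simp [hc j hj]

lemma partialSpan_mono (lam : Fin n → Fin n → Finf) {i i' : Fin n} (h : i ≤ i') :
    partialSpan Fq lam i ⊆ partialSpan Fq lam i' := by
  rintro x ⟨c, hc, rfl⟩
  exact ⟨c, fun j hj => hc j fun hji => hj (hji.trans_le h), rfl⟩

lemma partialSpan_subset_span (lam : Fin n → Fin n → Finf) (i : Fin n) :
    partialSpan Fq lam i ⊆ Submodule.span Finf (lam '' Set.Iio i) := by
  rintro x ⟨c, hc, rfl⟩
  refine Submodule.sum_mem _ fun j _ => ?_
  by_cases hj : j < i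
  · exact Submodule.smul_mem _ _ (Submodule.subset_span ⟨j, hj, rfl⟩)
  · simp [hc j hj]

lemma exists_mem_lambdaSet_notMem_partialSpan (lam : Fin n → Fin n → Finf) (i : Fin n) :
    ∃ y ∈ LambdaSet Fq Finf n, y ∉ partialSpan Fq lam i := by
  classical
  by_contra! h
  have hsingle : ∀ k, Pi.single k 1 ∈ LambdaSet Fq Finf n := fun k j =>
    ⟨(Pi.single k 1 : Fin n → Polynomial Fq) j, by by_cases hj : j = k <;> simp [hj]⟩
  have := (Pi.basisFun Finf (Fin n)).linearIndependent.card_le_card_of_forall_mem_span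
    (w := fun j : Set.Iio i => lam j) fun k => by
      rw [← Set.image_eq_range, Pi.basisFun_apply]
      exact partialSpan_subset_span lam i (h _ (hsingle k))
  simp only [Fintype.card_fin, Set.mem_Iio, Finset.mem_Iio, implies_true, Fintype.card_ofFinset,
    Fin.card_Iio] at this
  omega

end Lattice

namespace CondII

variable {Fq : Type*} [Field Fq] [Fintype Fq]
variable {Finf : Type*} [Field Finf] [Algebra (Polynomial Fq) Finf]
variable {D : InftySetup Fq Finf} {n : ℕ} {μ : (Fin n → Finf) → ℝ} {lam : Fin n → Fin n → Finf}

lemma ne_zero (h : CondII Fq μ lam) (i : Fin n) : lam i ≠ 0 := fun h0 =>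
  (h i).1 (h0 ▸ (partialSpanSubmodule Fq lam i).zero_mem)

lemma monotone (h : CondII Fq μ lam) (hlam : ∀ i, lam i ∈ LambdaSet Fq Finf n) :
    Monotone fun i => μ (lam i) := fun i j hij =>
  (h i).2 (lam j) (hlam j) fun hj => (h j).1 (partialSpan_mono lam hij hj)

theorem notMem_span_Iio (h : CondII Fq μ lam) (hμ : D.IsNorm μ)
    (hlam : ∀ i, lam i ∈ LambdaSet Fq Finf n) (k : Fin n) :
    lam k ∉ Submodule.span Finf (lam '' Set.Iio k) := by
  intro hk
  obtain ⟨c, hc⟩ := (Fintype.mem_span_image_iff_exists_fun Finf).1 hk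
  choose a ha using fun j : Set.Iio k => D.poly_dense (c j)
  set η := lam k - ∑ j, a j • lam j
  have hη : η = ∑ j, (c j - algebraMap _ Finf (a j)) • lam j := by
    simp only [η, ← hc, sub_smul, Finset.sum_sub_distrib, algebraMap_smul]
  have hηΛ : η ∈ LambdaSet Fq Finf n :=
    (lambdaSubmodule Fq Finf n).sub_mem (hlam k) (Submodule.sum_mem _ fun j _ =>
      Submodule.smul_mem _ _ (hlam j))
  have hsum : ∑ j, a j • lam j ∈ partialSpanSubmodule Fq lam k :=
    Submodule.sum_mem _ fun j _ => Submodule.smul_mem _ _ (mem_partialSpan_of_lt lam j.2)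
  have hηk : η ∉ partialSpan Fq lam k := fun hmem => (h k).1 <| by
    have := (partialSpanSubmodule Fq lam k).add_mem hmem hsum
    rwa [sub_add_cancel] at this
  have hpos : 0 < μ (lam k) := hμ.pos (h.ne_zero k)
  have hlt : μ η < μ (lam k) := by
    rw [hη]
    refine hμ.apply_sum_lt hpos fun j _ => ?_
    rw [hμ.1]
    calc D.v (c j - algebraMap _ Finf (a j)) * μ (lam j)
        ≤ D.v (c j - algebraMap _ Finf (a j)) * μ (lam k) :=
          mul_le_mul_of_nonneg_left (h.monotone hlam j.2.le) (D.v_nonneg _)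
      _ < μ (lam k) := mul_lt_of_lt_one_left hpos (ha j)
  exact hlt.not_ge ((h k).2 η hηΛ hηk)

theorem apply_le {lam' : Fin n → Fin n → Finf} (h : CondII Fq μ lam) (h' : CondII Fq μ lam')
    (hμ : D.IsNorm μ) (hlam' : ∀ i, lam' i ∈ LambdaSet Fq Finf n) (i : Fin n) :
    μ (lam i) ≤ μ (lam' i) := by
  by_contra! hlt
  have hli : LinearIndependent Finf fun j : Set.Iic i => lam' j :=
    (linearIndependent_of_notMem_span_Iio (h'.notMem_span_Iio hμ hlam')).comp _
      Subtype.val_injective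
  have := hli.card_le_card_of_forall_mem_span (w := fun j : Set.Iio i => lam j) fun j => by
    rw [← Set.image_eq_range]
    refine partialSpan_subset_span (Fq := Fq) lam i (by_contra fun hj => ?_)
    exact ((h i).2 _ (hlam' j) hj).not_gt ((h'.monotone hlam' j.2).trans_lt hlt)
  simp at this

end CondII

namespace InftySetup.IsNorm

variable {Fq : Type*} [Field Fq] [Fintype Fq]
variable {Finf : Type*} [Field Finf] [Algebra (Polynomial Fq) Finf]
variable {D : InftySetup Fq Finf} {n : ℕ} {μ : (Fin n → Finf) → ℝ}

theorem exists_condII_lt (hμ : D.IsNorm μ) (k : ℕ) :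
    ∃ lam : Fin n → Fin n → Finf, (∀ i, lam i ∈ LambdaSet Fq Finf n) ∧
      ∀ i : Fin n, (i : ℕ) < k → lam i ∉ partialSpan Fq lam i ∧
        ∀ y ∈ LambdaSet Fq Finf n, y ∉ partialSpan Fq lam i → μ (lam i) ≤ μ y := by
  induction k with
  | zero => exact ⟨0, fun _ => (lambdaSubmodule Fq Finf n).zero_mem, fun _ h => absurd h (by omega)⟩
  | succ k ih =>
    obtain ⟨lam, hlam, hmin⟩ := ih
    by_cases hk : k < n
    swap
    · exact ⟨lam, hlam, fun i hi => hmin i (by omega)⟩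
    let k' : Fin n := ⟨k, hk⟩
    obtain ⟨m, ⟨hmΛ, hmk⟩, hm⟩ := hμ.exists_min_of_subset_lambdaSet Set.sdiff_subset
      (exists_mem_lambdaSet_notMem_partialSpan lam k')
    refine ⟨Function.update lam k' m, fun i => ?_, fun i hi => ?_⟩
    · rcases eq_or_ne i k' with rfl | hi
      · simpa using hmΛ
      · simpa [hi] using hlam i
    have hspan : partialSpan Fq (Function.update lam k' m) i = partialSpan Fq lam i :=
      partialSpan_congr fun j hj => Function.update_of_ne (by
        rintro rfl
        simp only [k', Fin.lt_def] at hj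
        omega) _ _
    rw [hspan]
    rcases (Nat.lt_succ_iff.1 hi).lt_or_eq with hik | hik
    · rw [Function.update_of_ne (by rintro rfl; simp [k'] at hik)]
      exact hmin i hik
    · obtain rfl : i = k' := Fin.ext hik
      rw [Function.update_self]
      exact ⟨hmk, fun y hy hyk => hm y ⟨hy, hyk⟩⟩

theorem exists_condII (hμ : D.IsNorm μ) :
    ∃ lam : Fin n → Fin n → Finf, (∀ i, lam i ∈ LambdaSet Fq Finf n) ∧ CondII Fq μ lam :=
  let ⟨lam, hlam, h⟩ := hμ.exists_condII_lt n
  ⟨lam, hlam, fun i => h i i.2⟩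

end InftySetup.IsNorm

theorem statement6_general {Fq : Type*} [Field Fq] [Fintype Fq]
    {Finf : Type*} [Field Finf] [Algebra (Polynomial Fq) Finf]
    (D : InftySetup Fq Finf) (n : ℕ)
    (μ : (Fin n → Finf) → ℝ) (hμ : D.IsNorm μ) :
    (∃ lam : Fin n → (Fin n → Finf),
      (∀ i, lam i ∈ LambdaSet Fq Finf n) ∧ CondII Fq μ lam) ∧
    (∀ lam lam' : Fin n → (Fin n → Finf),
      (∀ i, lam i ∈ LambdaSet Fq Finf n) → (∀ i, lam' i ∈ LambdaSet Fq Finf n) →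
      CondII Fq μ lam → CondII Fq μ lam' → ∀ i, μ (lam i) = μ (lam' i)) :=
  ⟨hμ.exists_condII, fun _ _ hlam hlam' h h' i =>
    (h.apply_le h' hμ hlam' i).antisymm (h'.apply_le h hμ hlam i)⟩

/-- Let `μ` be a norm on `F_∞^n`.  Then (1) there exists a family
`λ_1, …, λ_n ∈ Λ` satisfying condition (ii), and (2) any two such families have the same
norms `μ(λ_i)`. -/
theorem statement6 {Fq : Type*} [Field Fq] [Fintype Fq]
    {Finf : Type*} [Field Finf] [Algebra (Polynomial Fq) Finf]
    (D : InftySetup Fq Finf) (n : ℕ) (hn : 1 ≤ n)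
    (μ : (Fin n → Finf) → ℝ) (hμ : D.IsNorm μ) :
    (∃ lam : Fin n → (Fin n → Finf),
      (∀ i, lam i ∈ LambdaSet Fq Finf n) ∧ CondII Fq μ lam) ∧
    (∀ lam lam' : Fin n → (Fin n → Finf),
      (∀ i, lam i ∈ LambdaSet Fq Finf n) → (∀ i, lam' i ∈ LambdaSet Fq Finf n) →
      CondII Fq μ lam → CondII Fq μ lam' → ∀ i, μ (lam i) = μ (lam' i)) :=
  statement6_general D n μ hμ
end
end
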